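/- arXiv:2604.00185 — 2 statements merged into one kernel-verified Lean document; each statement's English description precedes it below -/
import Mathlib

section
/- Let P be a two-orbit n-polytope in class 2_I with base flag Φ, and fix l ∈ N. Define Γ_l^- and Γ_l^+ as the subgroups generated by the distinguished generators with all indices < l, respectively all indices > l. Then every element of Γ_l^- commutes with every element of Γ_l^+, Γ_l^- ∩ Γ_l^+ = 1, and the product Γ_l^- Γ_l^+ is a subgroup of the stabilizer Γ_l of Φ_l isomorphic to Γ_l^- × Γ_l^+. -/
/-- An abstract polytope of rank `n`, presented by a partially ordered type of faces
with a strictly monotone rank function onto `{-1, 0, ..., n}`, such that every flag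
(maximal chain) has exactly one face of each rank (`faceAt`), every flag has a unique
`i`-adjacent flag for each `i = 0, ..., n-1` (the diamond condition, via `adj`), and
which is strongly flag-connected. -/
structure AbstractPolytope (n : ℕ) (Face : Type*) [PartialOrder Face] where
  rank : Face → ℤ
  rank_strictMono : ∀ {F G : Face}, F < G → rank F < rank G
  rank_le : ∀ F : Face, -1 ≤ rank F ∧ rank F ≤ (n : ℤ)
  /-- the unique face of rank `i` in the flag `Φ`, for `-1 ≤ i ≤ n` -/
  faceAt : Flag Face → ℤ → Face
  faceAt_mem : ∀ (Φ : Flag Face) (i : ℤ), -1 ≤ i → i ≤ (n : ℤ) → faceAt Φ i ∈ Φ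
  faceAt_rank : ∀ (Φ : Flag Face) (i : ℤ), -1 ≤ i → i ≤ (n : ℤ) → rank (faceAt Φ i) = i
  faceAt_eq : ∀ (Φ : Flag Face) (F : Face), F ∈ Φ → faceAt Φ (rank F) = F
  /-- the unique `i`-adjacent flag of `Φ`, for `0 ≤ i ≤ n-1` -/
  adj : Flag Face → ℕ → Flag Face
  adj_ne : ∀ (Φ : Flag Face) (i : ℕ), i < n → adj Φ i ≠ Φ
  adj_mem : ∀ (Φ : Flag Face) (i : ℕ), i < n →
    ∀ F ∈ Φ, rank F ≠ (i : ℤ) → F ∈ adj Φ i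
  adj_unique : ∀ (Φ Ψ : Flag Face) (i : ℕ), i < n → Ψ ≠ Φ →
    (∀ F ∈ Φ, rank F ≠ (i : ℤ) → F ∈ Ψ) → Ψ = adj Φ i
  /-- strong flag-connectedness: any two flags are joined by a sequence of successively
  adjacent flags, with all adjacencies at ranks not occurring among their common faces -/
  connected : ∀ Φ Ψ : Flag Face, ∃ (l : ℕ) (c : ℕ → Flag Face), c 0 = Φ ∧ c l = Ψ ∧
    ∀ m < l, ∃ i : ℕ, i < n ∧ c (m + 1) = adj (c m) i ∧
      ∀ F : Face, F ∈ Φ → F ∈ Ψ → rank F ≠ (i : ℤ)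

namespace AbstractPolytope

variable {n : ℕ} {Face : Type*} [PartialOrder Face]

/-- The automorphism group `Γ(P)`: order automorphisms of the set of faces.
It acts on flags via `Flag.map`; `g • Φ` denotes the image flag. -/
instance : MulAction (Face ≃o Face) (Flag Face) where
  smul g Φ := Flag.map g Φ
  one_smul Φ := by
    show Flag.map 1 Φ = Φ
    ext x
    simp [Flag.map, Flag.ofIsMaxChain]
  mul_smul g h Φ := by
    show Flag.map (g * h) Φ = Flag.map g (Flag.map h Φ)
    ext x
    simp [Flag.map, Flag.ofIsMaxChain, Set.image_image]

lemma smul_flag_def (g : Face ≃o Face) (Φ : Flag Face) : g • Φ = Flag.map g Φ := rfl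

/-- Two flags lie in the same orbit under the automorphism group. -/
def SameOrbit (Φ Ψ : Flag Face) : Prop := ∃ g : Face ≃o Face, g • Φ = Ψ

/-- The polytope has exactly two orbits on flags. -/
def TwoOrbit (_A : AbstractPolytope n Face) : Prop :=
  ∃ Φ Ψ : Flag Face, ¬ SameOrbit Φ Ψ ∧ ∀ X : Flag Face, SameOrbit X Φ ∨ SameOrbit X Ψ

/-- `I` is the class type set of the two-orbit polytope `A`: it consists precisely of
those ranks `i ∈ {0,...,n-1}` such that every flag and its `i`-adjacent flag lie in the
same orbit; that is, `A` is in the class `2_I`. -/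
def InClass (A : AbstractPolytope n Face) (I : Set ℕ) : Prop :=
  (∀ i ∈ I, i < n) ∧ ∀ i : ℕ, i < n → (i ∈ I ↔ ∀ Φ : Flag Face, SameOrbit Φ (A.adj Φ i))

/-- The stabilizer in the automorphism group of a face `F`. -/
def faceStab (_A : AbstractPolytope n Face) (F : Face) : Subgroup (Face ≃o Face) where
  carrier := {g : Face ≃o Face | g F = F}
  one_mem' := rfl
  mul_mem' := by
    intro a b ha hb
    show (a * b) F = F
    rw [RelIso.mul_apply]
    rw [show b F = F from hb, show a F = F from ha]
  inv_mem' := by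
    intro a ha
    show a⁻¹ F = F
    conv_lhs => rw [← show a F = F from ha]
    exact a.symm_apply_apply F

lemma mem_faceStab {A : AbstractPolytope n Face} {F : Face} {g : Face ≃o Face} :
    g ∈ A.faceStab F ↔ g F = F := Iff.rfl

end AbstractPolytope

/-!
Everything is read off from the action on the base flag `Φ`. Each generator with indices `< l`
(resp. `> l`) sends `Φ` to the flag reached from `Φ` by a word of adjacencies with ranks `< l`
(resp. `> l`), and the automorphisms with this property form a subgroup. Such an automorphism
fixes every face `Φ_r` with `r ≥ l` (resp. `r ≤ l`), so an element of both groups fixes `Φ` and is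
trivial. Adjacencies at ranks `i + 1 < k` commute by the diamond condition, so `g h Φ = h g Φ`
for `g ∈ Γ_l⁻`, `h ∈ Γ_l⁺`, and since automorphisms are determined by the image of one flag,
`g h = h g`. Commuting subgroups with trivial intersection span an internal direct product.
-/

namespace Subgroup

variable {G : Type*} [Group G] {H K : Subgroup G}

open scoped Pointwise in
theorem coe_sup_of_le_centralizer (hHK : H ≤ centralizer K) :
    ((H ⊔ K : Subgroup G) : Set G) = (H : Set G) * K :=
  coe_mul_of_left_le_normalizer_right H K (hHK.trans (centralizer_le_normalizer _))

noncomputable def prodMulEquivSupOfDisjoint (hHK : H ≤ centralizer K) (hdisj : Disjoint H K) :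
    H × K ≃* ↥(H ⊔ K) :=
  let f : H × K →* G := H.subtype.noncommCoprod K.subtype fun h k =>
    (mem_centralizer_iff.1 (hHK h.2) k k.2).symm
  have hf : Function.Injective f := (MonoidHom.noncommCoprod_injective _ _ _).2
    ⟨H.subtype_injective, K.subtype_injective, by simpa only [range_subtype]⟩
  (MonoidHom.ofInjective hf).trans <| MulEquiv.subgroupCongr <|
    (MonoidHom.noncommCoprod_range _ _ _).trans (by rw [range_subtype, range_subtype])

end Subgroup

theorem Flag.eq_of_le {α : Type*} [LE α] {Φ Ψ : Flag α} (h : Φ ≤ Ψ) : Φ = Ψ :=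
  SetLike.coe_injective (Φ.maxChain.2 Ψ.chain_le h)

namespace AbstractPolytope

variable {n : ℕ} {Face : Type*} [PartialOrder Face] (A : AbstractPolytope n Face)

theorem mem_smul_flag {g : Face ≃o Face} {Φ : Flag Face} {F : Face} :
    F ∈ g • Φ ↔ ∃ F' ∈ Φ, g F' = F :=
  Set.mem_image _ _ _

theorem apply_mem_smul_flag (g : Face ≃o Face) {Φ : Flag Face} {F : Face} (h : F ∈ Φ) :
    g F ∈ g • Φ :=
  mem_smul_flag.2 ⟨F, h, rfl⟩

theorem rank_mono {F G : Face} (h : F ≤ G) : A.rank F ≤ A.rank G := by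
  rcases h.eq_or_lt with rfl | h
  · rfl
  · exact (A.rank_strictMono h).le

theorem eq_of_rank_eq {Φ : Flag Face} {F G : Face} (hF : F ∈ Φ) (hG : G ∈ Φ)
    (h : A.rank F = A.rank G) : F = G := by
  rw [← A.faceAt_eq Φ F hF, ← A.faceAt_eq Φ G hG, h]

theorem lt_of_rank_lt {Φ : Flag Face} {F G : Face} (hF : F ∈ Φ) (hG : G ∈ Φ)
    (h : A.rank F < A.rank G) : F < G := by
  rcases Φ.le_or_le hF hG with hle | hle
  · exact hle.lt_of_ne (by rintro rfl; exact h.false)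
  · exact absurd (A.rank_mono hle) h.not_ge

theorem le_of_rank_le {Φ : Flag Face} {F G : Face} (hF : F ∈ Φ) (hG : G ∈ Φ)
    (h : A.rank F ≤ A.rank G) : F ≤ G := by
  rcases h.eq_or_lt with h | h
  · exact (A.eq_of_rank_eq hF hG h).le
  · exact (A.lt_of_rank_lt hF hG h).le

theorem faceAt_strictMonoOn (Φ : Flag Face) :
    StrictMonoOn (A.faceAt Φ) (Set.Icc (-1) n) := fun r hr s hs h =>
  A.lt_of_rank_lt (A.faceAt_mem Φ r hr.1 hr.2) (A.faceAt_mem Φ s hs.1 hs.2)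
    (by rwa [A.faceAt_rank Φ r hr.1 hr.2, A.faceAt_rank Φ s hs.1 hs.2])

theorem faceAt_adj_of_ne (Φ : Flag Face) {i : ℕ} (hi : i < n) {r : ℤ}
    (h1 : -1 ≤ r) (h2 : r ≤ n) (hne : r ≠ i) :
    A.faceAt (A.adj Φ i) r = A.faceAt Φ r := by
  have hr := A.faceAt_rank Φ r h1 h2
  have hmem := A.adj_mem Φ i hi _ (A.faceAt_mem Φ r h1 h2) (by rwa [hr])
  rw [← A.faceAt_eq _ _ hmem, hr]

theorem faceAt_adj_ne (Φ : Flag Face) {i : ℕ} (hi : i < n) :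
    A.faceAt (A.adj Φ i) i ≠ A.faceAt Φ i := by
  intro h
  refine A.adj_ne Φ i hi (Flag.eq_of_le fun F hF => ?_).symm
  by_cases hr : A.rank F = i
  · rw [← A.faceAt_eq Φ F hF, hr, ← h]
    exact A.faceAt_mem _ _ (by omega) (by omega)
  · exact A.adj_mem Φ i hi F hF hr

theorem mem_of_mem_adj (Φ : Flag Face) {i : ℕ} (hi : i < n) {F : Face}
    (hF : F ∈ A.adj Φ i) (hr : A.rank F ≠ i) : F ∈ Φ := by
  obtain ⟨h1, h2⟩ := A.rank_le F
  rw [← A.faceAt_eq _ F hF, A.faceAt_adj_of_ne Φ hi h1 h2 hr]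
  exact A.faceAt_mem Φ _ h1 h2

theorem adj_adj (Φ : Flag Face) {i : ℕ} (hi : i < n) : A.adj (A.adj Φ i) i = Φ :=
  (A.adj_unique _ Φ i hi (A.adj_ne Φ i hi).symm fun _ hF hr => A.mem_of_mem_adj Φ hi hF hr).symm

/-- Along a flag `Φ` through `F`, `r ↦ rank (g Φ_r)` is a strictly monotone self-map of the
finite chain `[-1, n]`, hence the identity. -/
theorem rank_apply (g : Face ≃o Face) (F : Face) : A.rank (g F) = A.rank F := by
  obtain ⟨Φ, hΦ⟩ := Flag.exists_mem F
  let f : Set.Icc (-1 : ℤ) n → Set.Icc (-1 : ℤ) n := fun s =>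
    ⟨A.rank (g (A.faceAt Φ s)), A.rank_le _⟩
  have hf : StrictMono f := fun s t hst =>
    A.rank_strictMono (g.strictMono (A.faceAt_strictMonoOn Φ s.2 t.2 hst))
  have hfF : f ⟨A.rank F, A.rank_le F⟩ = ⟨A.rank F, A.rank_le F⟩ :=
    le_antisymm hf.apply_le hf.le_apply
  simpa only [f, A.faceAt_eq Φ F hΦ] using congrArg Subtype.val hfF

theorem apply_faceAt (g : Face ≃o Face) (Φ : Flag Face) {r : ℤ} (h1 : -1 ≤ r) (h2 : r ≤ n) :
    g (A.faceAt Φ r) = A.faceAt (g • Φ) r := by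
  have h := A.faceAt_eq _ _ (apply_mem_smul_flag g (A.faceAt_mem Φ r h1 h2))
  rwa [A.rank_apply, A.faceAt_rank Φ r h1 h2, eq_comm] at h

theorem smul_adj (g : Face ≃o Face) (Φ : Flag Face) {i : ℕ} (hi : i < n) :
    g • A.adj Φ i = A.adj (g • Φ) i := by
  refine A.adj_unique _ _ i hi (fun h => A.adj_ne Φ i hi (smul_left_cancel g h)) ?_
  intro F hF hr
  obtain ⟨F', hF', rfl⟩ := mem_smul_flag.1 hF
  rw [rank_apply] at hr
  exact apply_mem_smul_flag g (A.adj_mem Φ i hi F' hF' hr)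

theorem eq_one_of_smul_eq_self (A : AbstractPolytope n Face) {g : Face ≃o Face} {Φ : Flag Face}
    (h : g • Φ = Φ) : g = 1 := by
  have hflag : ∀ Ψ : Flag Face, g • Ψ = Ψ := by
    intro Ψ
    obtain ⟨L, c, rfl, rfl, hstep⟩ := A.connected Φ Ψ
    suffices ∀ m ≤ L, g • c m = c m from this L le_rfl
    intro m
    induction m with
    | zero => exact fun _ => h
    | succ m ih =>
      intro hm
      obtain ⟨i, hi, hc, -⟩ := hstep m hm
      rw [hc, A.smul_adj g _ hi, ih (by omega)]
  refine DFunLike.ext _ _ fun F => ?_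
  obtain ⟨Ψ, hΨ⟩ := Flag.exists_mem F
  have hgF := apply_mem_smul_flag g hΨ
  rw [hflag] at hgF
  exact A.eq_of_rank_eq hgF hΨ (A.rank_apply g F)

theorem eq_of_smul_eq_smul (A : AbstractPolytope n Face) {g h : Face ≃o Face} {Φ : Flag Face}
    (hgh : g • Φ = h • Φ) : g = h :=
  inv_mul_eq_one.1 (A.eq_one_of_smul_eq_self (by rw [mul_smul, ← hgh, inv_smul_smul]))

/-- The diamond condition: `H` and the faces of `Φ` of rank `≠ i` extend to a flag, which by
`adj_unique` is `Φ` or `Φ^i`. -/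
theorem eq_faceAt_or_eq_faceAt_adj (Φ : Flag Face) {i : ℕ} (hi : i < n) {H : Face}
    (hH : A.rank H = i) (hlow : A.faceAt Φ (i - 1) < H) (hhigh : H < A.faceAt Φ (i + 1)) :
    H = A.faceAt Φ i ∨ H = A.faceAt (A.adj Φ i) i := by
  by_cases hΦ : H = A.faceAt Φ i
  · exact Or.inl hΦ
  right
  have hlowΦ := A.faceAt_mem Φ (i - 1) (by omega) (by omega)
  have hlowr := A.faceAt_rank Φ (i - 1) (by omega) (by omega)
  have hhighΦ := A.faceAt_mem Φ (i + 1) (by omega) (by omega)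
  have hhighr := A.faceAt_rank Φ (i + 1) (by omega) (by omega)
  have hC : IsChain (· ≤ ·) (insert H {F | F ∈ Φ ∧ A.rank F ≠ i}) := by
    refine (Φ.chain_le.mono fun F hF => hF.1).insert fun F ⟨hF, hr⟩ _ => ?_
    rcases hr.lt_or_gt with hr | hr
    · exact Or.inr ((A.le_of_rank_le hF hlowΦ (by omega)).trans hlow.le)
    · exact Or.inl (hhigh.le.trans (A.le_of_rank_le hhighΦ hF (by omega)))
  obtain ⟨Ψ, hΨ⟩ := hC.exists_subset_flag
  have hHΨ : H ∈ Ψ := hΨ (Set.mem_insert _ _)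
  have hadj : Ψ = A.adj Φ i := by
    refine A.adj_unique Φ Ψ i hi ?_ fun F hF hr => hΨ (Or.inr ⟨hF, hr⟩)
    rintro rfl
    exact hΦ (by rw [← hH, A.faceAt_eq Ψ H hHΨ])
  rw [← hadj, ← hH, A.faceAt_eq Ψ H hHΨ]

theorem adj_adj_comm (Φ : Flag Face) {i k : ℕ} (hk : k < n) (hik : i + 1 < k) :
    A.adj (A.adj Φ i) k = A.adj (A.adj Φ k) i := by
  have hi : i < n := by omega
  set Ψ := A.adj (A.adj Φ k) i
  have hΨ : ∀ r : ℤ, -1 ≤ r → r ≤ n → r ≠ i → r ≠ k → A.faceAt Ψ r = A.faceAt Φ r :=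
    fun r h1 h2 hri hrk => by
      rw [A.faceAt_adj_of_ne _ hi h1 h2 hri, A.faceAt_adj_of_ne _ hk h1 h2 hrk]
  have hΨk : A.faceAt Ψ k = A.faceAt (A.adj Φ k) k :=
    A.faceAt_adj_of_ne _ hi (by omega) (by omega) (by omega)
  have hΦki : A.faceAt (A.adj Φ k) i = A.faceAt Φ i :=
    A.faceAt_adj_of_ne _ hk (by omega) (by omega) (by omega)
  refine (A.adj_unique _ Ψ k hk (fun h => A.faceAt_adj_ne Φ hk ?_) fun F hF hrk => ?_).symm
  · rw [← hΨk, h, A.faceAt_adj_of_ne _ hi (by omega) (by omega) (by omega)]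
  by_cases hri : A.rank F = i
  · -- `Ψ_i` lies strictly between `Φ_{i-1}` and `Φ_{i+1}` and is not `(Φ^k)_i = Φ_i`.
    have hΨi : A.faceAt Ψ i = A.faceAt (A.adj Φ i) i := by
      refine (A.eq_faceAt_or_eq_faceAt_adj Φ hi (A.faceAt_rank Ψ i (by omega) (by omega))
        ?_ ?_).resolve_left fun h => A.faceAt_adj_ne _ hi (h.trans hΦki.symm)
      all_goals
        rw [← hΨ _ (by omega) (by omega) (by omega) (by omega)]
        exact A.faceAt_strictMonoOn Ψ ⟨by omega, by omega⟩ ⟨by omega, by omega⟩ (by omega)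
    rw [← A.faceAt_eq _ F hF, hri, ← hΨi]
    exact A.faceAt_mem Ψ i (by omega) (by omega)
  · exact A.adj_mem _ i hi F (A.adj_mem Φ k hk F (A.mem_of_mem_adj Φ hi hF hri) hrk) hri

/-- `adjWord [i₁, …, iₘ] Ψ = (⋯(Ψ^{iₘ})⋯)^{i₁}`: the last index acts first. -/
def adjWord (L : List ℕ) (Ψ : Flag Face) : Flag Face :=
  L.foldr (fun i Ψ => A.adj Ψ i) Ψ

theorem adjWord_append (L₁ L₂ : List ℕ) (Ψ : Flag Face) :
    A.adjWord (L₁ ++ L₂) Ψ = A.adjWord L₁ (A.adjWord L₂ Ψ) :=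
  List.foldr_append

theorem smul_adjWord (g : Face ≃o Face) {L : List ℕ} (hL : ∀ i ∈ L, i < n) (Ψ : Flag Face) :
    g • A.adjWord L Ψ = A.adjWord L (g • Ψ) := by
  induction L with
  | nil => rfl
  | cons i L ih =>
    simp only [List.forall_mem_cons] at hL
    exact (A.smul_adj g _ hL.1).trans (congrArg (A.adj · i) (ih hL.2))

theorem adjWord_reverse_adjWord {L : List ℕ} (hL : ∀ i ∈ L, i < n) (Ψ : Flag Face) :
    A.adjWord L.reverse (A.adjWord L Ψ) = Ψ := by
  induction L generalizing Ψ with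
  | nil => rfl
  | cons i L ih =>
    simp only [List.forall_mem_cons] at hL
    rw [List.reverse_cons, adjWord_append]
    exact (congrArg (A.adjWord L.reverse) (A.adj_adj _ hL.1)).trans (ih hL.2 Ψ)

theorem adj_adjWord_comm {i : ℕ} {L : List ℕ} (hL : ∀ k ∈ L, i + 1 < k ∧ k < n)
    (Ψ : Flag Face) : A.adj (A.adjWord L Ψ) i = A.adjWord L (A.adj Ψ i) := by
  induction L with
  | nil => rfl
  | cons k L ih =>
    simp only [List.forall_mem_cons] at hL
    exact (A.adj_adj_comm _ hL.1.2 hL.1.1).symm.trans (congrArg (A.adj · k) (ih hL.2))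

theorem adjWord_comm {L₁ L₂ : List ℕ} (hsep : ∀ i ∈ L₁, ∀ k ∈ L₂, i + 1 < k)
    (hL₂ : ∀ k ∈ L₂, k < n) (Ψ : Flag Face) :
    A.adjWord L₁ (A.adjWord L₂ Ψ) = A.adjWord L₂ (A.adjWord L₁ Ψ) := by
  induction L₁ with
  | nil => rfl
  | cons i L ih =>
    simp only [List.forall_mem_cons] at hsep
    exact (congrArg (A.adj · i) (ih hsep.2)).trans
      (A.adj_adjWord_comm (fun k hk => ⟨hsep.1 k hk, hL₂ k hk⟩) _)

theorem faceAt_adjWord {L : List ℕ} (hL : ∀ i ∈ L, i < n) (Ψ : Flag Face) {r : ℤ}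
    (h1 : -1 ≤ r) (h2 : r ≤ n) (hr : ∀ i ∈ L, r ≠ i) :
    A.faceAt (A.adjWord L Ψ) r = A.faceAt Ψ r := by
  induction L with
  | nil => rfl
  | cons i L ih =>
    simp only [List.forall_mem_cons] at hL hr
    exact (A.faceAt_adj_of_ne _ hL.1 h1 h2 hr.1).trans (ih hL.2 hr.2)

def walkSubgroup (S : Set ℕ) (Φ : Flag Face) : Subgroup (Face ≃o Face) where
  carrier := {g | ∃ L : List ℕ, (∀ i ∈ L, i < n ∧ i ∈ S) ∧ g • Φ = A.adjWord L Φ}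
  one_mem' := ⟨[], by simp, one_smul _ _⟩
  mul_mem' := by
    rintro g h ⟨Lg, hLg, hg⟩ ⟨Lh, hLh, hh⟩
    refine ⟨Lh ++ Lg, fun i hi => (List.mem_append.1 hi).elim (hLh i) (hLg i), ?_⟩
    rw [mul_smul, hh, A.smul_adjWord g (fun i hi => (hLh i hi).1), hg, adjWord_append]
  inv_mem' := by
    rintro g ⟨L, hL, hg⟩
    have hLn : ∀ i ∈ L, i < n := fun i hi => (hL i hi).1
    refine ⟨L.reverse, fun i hi => hL i (List.mem_reverse.1 hi), ?_⟩
    have h : A.adjWord L (g⁻¹ • Φ) = Φ := by rw [← A.smul_adjWord g⁻¹ hLn, ← hg, inv_smul_smul]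
    rw [← A.adjWord_reverse_adjWord hLn (g⁻¹ • Φ), h]

theorem apply_faceAt_of_mem_walkSubgroup {S : Set ℕ} {Φ : Flag Face} {g : Face ≃o Face}
    (hg : g ∈ A.walkSubgroup S Φ) {r : ℤ} (h1 : -1 ≤ r) (h2 : r ≤ n) (hr : ∀ i ∈ S, r ≠ i) :
    g (A.faceAt Φ r) = A.faceAt Φ r := by
  obtain ⟨L, hL, hgΦ⟩ := hg
  rw [A.apply_faceAt g Φ h1 h2, hgΦ,
    A.faceAt_adjWord (fun i hi => (hL i hi).1) Φ h1 h2 fun i hi => hr i (hL i hi).2]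

theorem walkSubgroup_le_faceStab {S : Set ℕ} (Φ : Flag Face) {r : ℤ} (h1 : -1 ≤ r)
    (h2 : r ≤ n) (hr : ∀ i ∈ S, r ≠ i) : A.walkSubgroup S Φ ≤ A.faceStab (A.faceAt Φ r) :=
  fun _ hg => A.apply_faceAt_of_mem_walkSubgroup hg h1 h2 hr

theorem walkSubgroup_le_centralizer {S T : Set ℕ} (Φ : Flag Face)
    (hST : ∀ i ∈ S, ∀ k ∈ T, i + 1 < k) :
    A.walkSubgroup S Φ ≤ Subgroup.centralizer (A.walkSubgroup T Φ) := by
  rintro g ⟨Lg, hLg, hg⟩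
  rw [Subgroup.mem_centralizer_iff]
  rintro h ⟨Lh, hLh, hh⟩
  refine A.eq_of_smul_eq_smul (Φ := Φ) ?_
  rw [mul_smul, mul_smul, hg, hh, A.smul_adjWord h (fun i hi => (hLg i hi).1),
    A.smul_adjWord g (fun i hi => (hLh i hi).1), hg, hh,
    A.adjWord_comm (fun i hi k hk => hST i (hLg i hi).2 k (hLh k hk).2) (fun k hk => (hLh k hk).1)]

theorem disjoint_walkSubgroup_Iio_Ioi (Φ : Flag Face) (l : ℕ) :
    Disjoint (A.walkSubgroup (Set.Iio l) Φ) (A.walkSubgroup (Set.Ioi l) Φ) := by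
  rw [Subgroup.disjoint_def]
  intro g hm hp
  refine A.eq_one_of_smul_eq_self (Φ := Φ) (Flag.eq_of_le fun F hF => ?_).symm
  obtain ⟨h1, h2⟩ := A.rank_le F
  have hgF : g F = F := by
    rw [← A.faceAt_eq Φ F hF]
    rcases le_total (A.rank F) l with h | h
    · exact A.apply_faceAt_of_mem_walkSubgroup hp h1 h2 fun i (hi : l < i) => by omega
    · exact A.apply_faceAt_of_mem_walkSubgroup hm h1 h2 fun i (hi : i < l) => by omega
  simpa only [hgF] using apply_mem_smul_flag g hF

end AbstractPolytope

open Pointwise in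
open AbstractPolytope in
theorem stmt15_general {n : ℕ} {Face : Type*} [PartialOrder Face] (A : AbstractPolytope n Face)
    (I : Set ℕ) (hI : A.InClass I)
    (Φ : Flag Face)
    (ρ : ℕ → (Face ≃o Face)) (α : ℕ → ℕ → (Face ≃o Face)) (β : ℕ → ℕ → (Face ≃o Face))
    (hρ : ∀ i ∈ I, (ρ i) • Φ = A.adj Φ i)
    (hα : ∀ j k : ℕ, j < n → k < n → j ∉ I → k ∉ I →
        (α j k) • Φ = A.adj (A.adj Φ j) k)
    (hβ : ∀ j : ℕ, ∀ i ∈ I, j < n → j ∉ I →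
        (β j i) • Φ = A.adj (A.adj (A.adj Φ j) i) j)
    (l : ℕ) (hl : l < n) :
    ∀ Gm Gp : Subgroup (Face ≃o Face),
      Gm = Subgroup.closure
        ({x : Face ≃o Face | ∃ i ∈ I, i < l ∧ x = ρ i}
          ∪ {x : Face ≃o Face | ∃ j k : ℕ, j ∉ I ∧ k ∉ I ∧ j < l ∧ k < l ∧ x = α j k}
          ∪ {x : Face ≃o Face | ∃ j : ℕ, ∃ i ∈ I, j ∉ I ∧ j < l ∧ i < l ∧ x = β j i}) →
      Gp = Subgroup.closure
        ({x : Face ≃o Face | ∃ i ∈ I, l < i ∧ x = ρ i}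
          ∪ {x : Face ≃o Face | ∃ j k : ℕ, j < n ∧ k < n ∧ j ∉ I ∧ k ∉ I ∧
              l < j ∧ l < k ∧ x = α j k}
          ∪ {x : Face ≃o Face | ∃ j : ℕ, ∃ i ∈ I, j < n ∧ j ∉ I ∧ l < j ∧ l < i ∧
              x = β j i}) →
      (∀ g ∈ Gm, ∀ h ∈ Gp, g * h = h * g)
      ∧ Gm ⊓ Gp = ⊥
      ∧ ∃ H : Subgroup (Face ≃o Face),
          (H : Set (Face ≃o Face)) = (Gm : Set (Face ≃o Face)) * (Gp : Set (Face ≃o Face))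
          ∧ H ≤ A.faceStab (A.faceAt Φ (l : ℤ))
          ∧ Nonempty (H ≃* Gm × Gp) := by
  intro Gm Gp hGm hGp
  have hm : Gm ≤ A.walkSubgroup (Set.Iio l) Φ := by
    rw [hGm, Subgroup.closure_le]
    rintro x ((⟨i, hiI, hil, rfl⟩ | ⟨j, k, hjI, hkI, hjl, hkl, rfl⟩) |
      ⟨j, i, hiI, hjI, hjl, hil, rfl⟩)
    · exact ⟨[i], by simp [hil, hI.1 i hiI], hρ i hiI⟩
    · exact ⟨[k, j], by simp [hkl, hjl, hkl.trans hl, hjl.trans hl],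
        hα j k (hjl.trans hl) (hkl.trans hl) hjI hkI⟩
    · exact ⟨[j, i, j], by simp [hjl, hil, hjl.trans hl, hI.1 i hiI],
        hβ j i hiI (hjl.trans hl) hjI⟩
  have hp : Gp ≤ A.walkSubgroup (Set.Ioi l) Φ := by
    rw [hGp, Subgroup.closure_le]
    rintro x ((⟨i, hiI, hil, rfl⟩ | ⟨j, k, hjn, hkn, hjI, hkI, hjl, hkl, rfl⟩) |
      ⟨j, i, hiI, hjn, hjI, hjl, hil, rfl⟩)
    · exact ⟨[i], by simp [hil, hI.1 i hiI], hρ i hiI⟩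
    · exact ⟨[k, j], by simp [hkl, hjl, hkn, hjn], hα j k hjn hkn hjI hkI⟩
    · exact ⟨[j, i, j], by simp [hjl, hil, hjn, hI.1 i hiI], hβ j i hiI hjn hjI⟩
  have hcent : Gm ≤ Subgroup.centralizer Gp :=
    (hm.trans (A.walkSubgroup_le_centralizer Φ fun i (hi : i < l) k (hk : l < k) => by omega)).trans
      (Subgroup.centralizer_le hp)
  have hdisj : Disjoint Gm Gp := (A.disjoint_walkSubgroup_Iio_Ioi Φ l).mono hm hp
  have hstab : Gm ⊔ Gp ≤ A.faceStab (A.faceAt Φ l) := sup_le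
    (hm.trans (A.walkSubgroup_le_faceStab Φ (by omega) (by omega) fun i (hi : i < l) => by omega))
    (hp.trans (A.walkSubgroup_le_faceStab Φ (by omega) (by omega) fun i (hi : l < i) => by omega))
  exact ⟨fun g hg h hh => (Subgroup.mem_centralizer_iff.1 (hcent hg) h hh).symm,
    disjoint_iff.1 hdisj, Gm ⊔ Gp, Subgroup.coe_sup_of_le_centralizer hcent, hstab,
    ⟨(Subgroup.prodMulEquivSupOfDisjoint hcent hdisj).symm⟩⟩

open Pointwise in
open AbstractPolytope in
/-- The subgroups `Γ_l⁻` and `Γ_l⁺`, generated by the distinguished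
generators with all indices `< l`, resp. `> l`, centralize each other, intersect
trivially, and their product is a subgroup of the stabilizer `Γ_l` of `Φ_l` isomorphic
to the direct product `Γ_l⁻ × Γ_l⁺`. -/
theorem stmt15 {n : ℕ} {Face : Type*} [PartialOrder Face] (A : AbstractPolytope n Face)
    (I : Set ℕ) (h2 : A.TwoOrbit) (hI : A.InClass I)
    (Φ : Flag Face)
    (ρ : ℕ → (Face ≃o Face)) (α : ℕ → ℕ → (Face ≃o Face)) (β : ℕ → ℕ → (Face ≃o Face))
    (hρ : ∀ i ∈ I, (ρ i) • Φ = A.adj Φ i)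
    (hα : ∀ j k : ℕ, j < n → k < n → j ∉ I → k ∉ I →
        (α j k) • Φ = A.adj (A.adj Φ j) k)
    (hβ : ∀ j : ℕ, ∀ i ∈ I, j < n → j ∉ I →
        (β j i) • Φ = A.adj (A.adj (A.adj Φ j) i) j)
    (l : ℕ) (hl : l < n) :
    ∀ Gm Gp : Subgroup (Face ≃o Face),
      Gm = Subgroup.closure
        ({x : Face ≃o Face | ∃ i ∈ I, i < l ∧ x = ρ i}
          ∪ {x : Face ≃o Face | ∃ j k : ℕ, j ∉ I ∧ k ∉ I ∧ j < l ∧ k < l ∧ x = α j k}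
          ∪ {x : Face ≃o Face | ∃ j : ℕ, ∃ i ∈ I, j ∉ I ∧ j < l ∧ i < l ∧ x = β j i}) →
      Gp = Subgroup.closure
        ({x : Face ≃o Face | ∃ i ∈ I, l < i ∧ x = ρ i}
          ∪ {x : Face ≃o Face | ∃ j k : ℕ, j < n ∧ k < n ∧ j ∉ I ∧ k ∉ I ∧
              l < j ∧ l < k ∧ x = α j k}
          ∪ {x : Face ≃o Face | ∃ j : ℕ, ∃ i ∈ I, j < n ∧ j ∉ I ∧ l < j ∧ l < i ∧
              x = β j i}) →
      (∀ g ∈ Gm, ∀ h ∈ Gp, g * h = h * g)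
      ∧ Gm ⊓ Gp = ⊥
      ∧ ∃ H : Subgroup (Face ≃o Face),
          (H : Set (Face ≃o Face)) = (Gm : Set (Face ≃o Face)) * (Gp : Set (Face ≃o Face))
          ∧ H ≤ A.faceStab (A.faceAt Φ (l : ℤ))
          ∧ Nonempty (H ≃* Gm × Gp) :=
  stmt15_general A I hI Φ ρ α β hρ hα hβ l hl
end

section
/- Let P be a two-orbit n-polytope in class 2_I with base flag Φ. For ranks -1 ≤ i ≤ j ≤ n with N \ I ≠ {i,j}, and for φ, ψ ∈ Γ(P): the incidence Φ_i φ ≤ Φ_j ψ holds if and only if the coset intersection Γ_i φ ∩ Γ_j ψ is nonempty, where Γ_i and Γ_j are the stabilizers in Γ(P) of Φ_i and Φ_j respectively. -/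
section Stmt17Aux

open AbstractPolytope

variable {n : ℕ} {Face : Type*} [PartialOrder Face]

lemma aux_mem_smul {g : Face ≃o Face} {Φ : Flag Face} {F : Face} :
    F ∈ g • Φ ↔ ∃ F' ∈ Φ, g F' = F := by
  rw [smul_flag_def, ← Flag.mem_coe_iff, Flag.coe_map]
  exact Set.mem_image _ _ _

lemma aux_smul_faceAt (A : AbstractPolytope n Face) (g : Face ≃o Face) (Φ : Flag Face) :
    ∀ l : ℤ, -1 ≤ l → l ≤ (n : ℤ) → g (A.faceAt Φ l) = A.faceAt (g • Φ) l := by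
  suffices h : ∀ t : ℕ, ∀ l : ℤ, -1 ≤ l → l ≤ (n : ℤ) → l + 1 < t →
      g (A.faceAt Φ l) = A.faceAt (g • Φ) l by
    intro l h1 h2
    exact h (n + 2) l h1 h2 (by omega)
  intro t
  induction t with
  | zero => intro l h1 _ h3; omega
  | succ t ih =>
    intro l h1 h2 h3
    have hmem : A.faceAt Φ l ∈ Φ := A.faceAt_mem Φ l h1 h2
    have humem : g (A.faceAt Φ l) ∈ g • Φ := aux_mem_smul.mpr ⟨_, hmem, rfl⟩
    have hvmem : A.faceAt (g • Φ) l ∈ g • Φ := A.faceAt_mem _ l h1 h2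
    rcases (g • Φ).le_or_le humem hvmem with hle | hle
    · rcases lt_or_eq_of_le hle with hlt | heq
      · exfalso
        have hk1 := (A.rank_le (g (A.faceAt Φ l))).1
        have hkv : A.rank (g (A.faceAt Φ l)) < A.rank (A.faceAt (g • Φ) l) :=
          A.rank_strictMono hlt
        rw [A.faceAt_rank _ l h1 h2] at hkv
        have heq1 : A.faceAt (g • Φ) (A.rank (g (A.faceAt Φ l))) = g (A.faceAt Φ l) :=
          A.faceAt_eq _ _ humem
        have hih := ih (A.rank (g (A.faceAt Φ l))) hk1 (by omega) (by omega)
        rw [heq1] at hih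
        have heq2 : A.faceAt Φ (A.rank (g (A.faceAt Φ l))) = A.faceAt Φ l := g.injective hih
        have h5 := A.faceAt_rank Φ (A.rank (g (A.faceAt Φ l))) hk1 (by omega)
        rw [heq2, A.faceAt_rank Φ l h1 h2] at h5
        omega
      · exact heq
    · rcases lt_or_eq_of_le hle with hlt | heq
      · exfalso
        obtain ⟨w, hwΦ, hw⟩ := aux_mem_smul.mp hvmem
        have hwlt : w < A.faceAt Φ l := by
          rw [← hw] at hlt
          exact g.lt_iff_lt.mp hlt
        have hrw : A.rank w < l := by
          have := A.rank_strictMono hwlt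
          rwa [A.faceAt_rank Φ l h1 h2] at this
        have hk1 := (A.rank_le w).1
        have heqw : A.faceAt Φ (A.rank w) = w := A.faceAt_eq Φ w hwΦ
        have hih := ih (A.rank w) hk1 (by omega) (by omega)
        rw [heqw, hw] at hih
        have h5 := A.faceAt_rank (g • Φ) (A.rank w) hk1 (by omega)
        rw [← hih, A.faceAt_rank _ l h1 h2] at h5
        omega
      · exact heq.symm

lemma aux_rank_smul (A : AbstractPolytope n Face) (g : Face ≃o Face) (F : Face) :
    A.rank (g F) = A.rank F := by
  have hchain : IsChain (· ≤ ·) ({F} : Set Face) := by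
    intro a ha b hb hab
    exact absurd (ha.trans hb.symm) hab
  obtain ⟨M, hM, hsub⟩ := hchain.exists_maxChain
  set Ψ := Flag.ofIsMaxChain M hM with hΨ
  have hF : F ∈ Ψ := hsub rfl
  have h1 := (A.rank_le F).1
  have h2 := (A.rank_le F).2
  have key := aux_smul_faceAt A g Ψ (A.rank F) h1 h2
  rw [A.faceAt_eq Ψ F hF] at key
  rw [key, A.faceAt_rank _ _ h1 h2]

lemma aux_smul_adj (A : AbstractPolytope n Face) (g : Face ≃o Face) (Φ : Flag Face)
    {k : ℕ} (hk : k < n) : g • A.adj Φ k = A.adj (g • Φ) k := by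
  refine A.adj_unique (g • Φ) (g • A.adj Φ k) k hk ?_ ?_
  · intro h
    exact A.adj_ne Φ k hk (MulAction.injective g h)
  · intro F hF hrF
    obtain ⟨F', hF', rfl⟩ := aux_mem_smul.mp hF
    rw [aux_rank_smul A g F'] at hrF
    exact aux_mem_smul.mpr ⟨F', A.adj_mem Φ k hk F' hF' hrF, rfl⟩

lemma aux_adj_adj (A : AbstractPolytope n Face) (Φ : Flag Face) {k : ℕ} (hk : k < n) :
    A.adj (A.adj Φ k) k = Φ := by
  refine (A.adj_unique (A.adj Φ k) Φ k hk (A.adj_ne Φ k hk).symm ?_).symm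
  intro F hF hrF
  have hb := A.rank_le F
  have h1 : A.faceAt Φ (A.rank F) ∈ A.adj Φ k :=
    A.adj_mem Φ k hk _ (A.faceAt_mem Φ _ hb.1 hb.2)
      (by rw [A.faceAt_rank Φ _ hb.1 hb.2]; exact hrF)
  have h2 : A.faceAt (A.adj Φ k) (A.rank (A.faceAt Φ (A.rank F))) = A.faceAt Φ (A.rank F) :=
    A.faceAt_eq _ _ h1
  rw [A.faceAt_rank Φ _ hb.1 hb.2] at h2
  have h3 : A.faceAt (A.adj Φ k) (A.rank F) = F := A.faceAt_eq _ _ hF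
  rw [h3] at h2
  rw [h2]
  exact A.faceAt_mem Φ _ hb.1 hb.2

lemma sameOrbit_refl (Φ : Flag Face) : SameOrbit Φ Φ := ⟨1, one_smul _ _⟩

lemma sameOrbit_symm {Φ Ψ : Flag Face} (h : SameOrbit Φ Ψ) : SameOrbit Ψ Φ := by
  obtain ⟨g, hg⟩ := h
  exact ⟨g⁻¹, by rw [← hg, inv_smul_smul]⟩

lemma sameOrbit_trans {Φ Ψ X : Flag Face} (h1 : SameOrbit Φ Ψ) (h2 : SameOrbit Ψ X) :
    SameOrbit Φ X := by
  obtain ⟨g, hg⟩ := h1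
  obtain ⟨h, hh⟩ := h2
  exact ⟨h * g, by rw [mul_smul, hg, hh]⟩

lemma aux_orbit_cases {A : AbstractPolytope n Face} (h2 : A.TwoOrbit) {X Y : Flag Face}
    (hXY : ¬ SameOrbit X Y) (Z : Flag Face) : SameOrbit Z X ∨ SameOrbit Z Y := by
  obtain ⟨Φ₀, Ψ₀, h01, hall⟩ := h2
  rcases hall X with hX | hX <;> rcases hall Y with hY | hY <;> rcases hall Z with hZ | hZ <;>
    first
      | exact absurd (sameOrbit_trans hX (sameOrbit_symm hY)) hXY
      | exact Or.inl (sameOrbit_trans hZ (sameOrbit_symm hX))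
      | exact Or.inr (sameOrbit_trans hZ (sameOrbit_symm hY))

lemma aux_dichotomy {A : AbstractPolytope n Face} {I : Set ℕ} (h2 : A.TwoOrbit)
    (hI : A.InClass I) {k : ℕ} (hk : k < n) (hkI : k ∉ I) (Λ : Flag Face) :
    ¬ SameOrbit Λ (A.adj Λ k) := by
  intro hΛ
  have hex : ¬ ∀ Ψ : Flag Face, SameOrbit Ψ (A.adj Ψ k) := fun h => hkI ((hI.2 k hk).mpr h)
  push_neg at hex
  obtain ⟨Ψ, hΨ⟩ := hex
  apply hΨ
  by_cases hc : SameOrbit Λ Ψ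
  · obtain ⟨x, hx⟩ := hc
    have hadj : x • A.adj Λ k = A.adj Ψ k := by rw [aux_smul_adj A x Λ hk, hx]
    exact sameOrbit_trans (sameOrbit_trans (sameOrbit_symm ⟨x, hx⟩) hΛ) ⟨x, hadj⟩
  · rcases aux_orbit_cases h2 hc (A.adj Ψ k) with h | h
    · exfalso
      obtain ⟨x, hx⟩ := h
      have key : A.adj (x • Ψ) k = Λ := by rw [← aux_smul_adj A x Ψ hk, hx]
      have hxΨ : x • Ψ = A.adj Λ k := by
        rw [← key]
        exact (aux_adj_adj A (x • Ψ) hk).symm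
      exact hc (sameOrbit_symm (sameOrbit_trans ⟨x, hxΨ⟩ (sameOrbit_symm hΛ)))
    · exact sameOrbit_symm h

lemma aux_connected_orbit (A : AbstractPolytope n Face) {I : Set ℕ} (hI : A.InClass I)
    {X Y : Flag Face} {W : Face} (hWX : W ∈ X) (hWY : W ∈ Y)
    (hall : ∀ k : ℕ, k < n → k ∉ I → (k : ℤ) = A.rank W) : SameOrbit X Y := by
  obtain ⟨l, c, hc0, hcl, hstep⟩ := A.connected X Y
  have key : ∀ m : ℕ, m ≤ l → SameOrbit X (c m) := by
    intro m
    induction m with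
    | zero => intro _; rw [hc0]; exact sameOrbit_refl _
    | succ m ih =>
      intro hm
      obtain ⟨k, hk, hck, hcomm⟩ := hstep m (by omega)
      have hkI : k ∈ I := by
        by_contra hkI
        exact hcomm W hWX hWY (hall k hk hkI).symm
      have hstepO := (hI.2 k hk).mp hkI (c m)
      rw [← hck] at hstepO
      exact sameOrbit_trans (ih (by omega)) hstepO
  have := key l le_rfl
  rwa [hcl] at this

end Stmt17Aux

open AbstractPolytope in
/-- Characterization of the partial order: for ranks `i ≤ j` with
`N \ I ≠ {i, j}`, and automorphisms `φ, ψ`, the incidence `Φ_i φ ≤ Φ_j ψ` holds iff the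
cosets `Γ_i φ` and `Γ_j ψ` of the face stabilizers intersect.  (An element of the
paper's right coset `Γ_i φ`, i.e. "`g` then `φ`", is the composition `φ * g` here.) -/
theorem stmt17 {n : ℕ} {Face : Type*} [PartialOrder Face] (A : AbstractPolytope n Face)
    (I : Set ℕ) (h2 : A.TwoOrbit) (hI : A.InClass I) (Φ : Flag Face)
    (i j : ℤ) (hi : -1 ≤ i) (hij : i ≤ j) (hj : j ≤ (n : ℤ))
    (hne : {m : ℤ | ∃ k : ℕ, k < n ∧ k ∉ I ∧ (k : ℤ) = m} ≠ {i, j})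
    (φ ψ : Face ≃o Face) :
    φ (A.faceAt Φ i) ≤ ψ (A.faceAt Φ j) ↔
      ∃ x : Face ≃o Face,
        (∃ g ∈ A.faceStab (A.faceAt Φ i), x = φ * g) ∧
        (∃ h ∈ A.faceStab (A.faceAt Φ j), x = ψ * h) := by
  have hi' : i ≤ (n : ℤ) := hij.trans hj
  have hj' : -1 ≤ j := hi.trans hij
  have hFi : A.faceAt Φ i ∈ Φ := A.faceAt_mem Φ i hi hi'
  have hFj : A.faceAt Φ j ∈ Φ := A.faceAt_mem Φ j hj' hj
  have hij_face : A.faceAt Φ i ≤ A.faceAt Φ j := by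
    rcases Φ.le_or_le hFi hFj with h | h
    · exact h
    · rcases lt_or_eq_of_le h with hlt | heq
      · have := A.rank_strictMono hlt
        rw [A.faceAt_rank Φ i hi hi', A.faceAt_rank Φ j hj' hj] at this
        omega
      · exact heq.ge
  constructor
  · intro hle
    have hrF : A.rank (φ (A.faceAt Φ i)) = i := by
      rw [aux_rank_smul A φ, A.faceAt_rank Φ i hi hi']
    have hrG : A.rank (ψ (A.faceAt Φ j)) = j := by
      rw [aux_rank_smul A ψ, A.faceAt_rank Φ j hj' hj]
    have hchain : IsChain (· ≤ ·) ({φ (A.faceAt Φ i), ψ (A.faceAt Φ j)} : Set Face) :=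
      IsChain.pair hle
    obtain ⟨M, hM, hsub⟩ := hchain.exists_maxChain
    set Λ := Flag.ofIsMaxChain M hM with hΛdef
    have hFΛ : φ (A.faceAt Φ i) ∈ Λ := hsub (Set.mem_insert _ _)
    have hGΛ : ψ (A.faceAt Φ j) ∈ Λ := hsub (Set.mem_insert_of_mem _ rfl)
    have hΩ : ∃ Ω : Flag Face,
        φ (A.faceAt Φ i) ∈ Ω ∧ ψ (A.faceAt Φ j) ∈ Ω ∧ SameOrbit Φ Ω := by
      by_cases hΦΛ : SameOrbit Φ Λ
      · exact ⟨Λ, hFΛ, hGΛ, hΦΛ⟩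
      by_cases hA : ∃ k : ℕ, k < n ∧ k ∉ I ∧ (k : ℤ) ≠ i ∧ (k : ℤ) ≠ j
      · obtain ⟨k, hk, hkI, hki, hkj⟩ := hA
        refine ⟨A.adj Λ k, A.adj_mem Λ k hk _ hFΛ (by rw [hrF]; exact hki.symm),
          A.adj_mem Λ k hk _ hGΛ (by rw [hrG]; exact hkj.symm), ?_⟩
        have hd := aux_dichotomy h2 hI hk hkI Λ
        rcases aux_orbit_cases h2 hΦΛ (A.adj Λ k) with h | h
        · exact sameOrbit_symm h
        · exact absurd (sameOrbit_symm h) hd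
      · exfalso
        push_neg at hA
        have hsplit : (∀ k : ℕ, k < n → k ∉ I → (k : ℤ) = i) ∨
            (∀ k : ℕ, k < n → k ∉ I → (k : ℤ) = j) := by
          by_contra hcon
          push_neg at hcon
          obtain ⟨⟨k1, hk1n, hk1I, hk1i⟩, ⟨k2, hk2n, hk2I, hk2j⟩⟩ := hcon
          have hk1j : (k1 : ℤ) = j := hA k1 hk1n hk1I hk1i
          have hk2i : (k2 : ℤ) = i := by
            by_contra h
            exact hk2j (hA k2 hk2n hk2I h)
          apply hne
          ext m
          simp only [Set.mem_setOf_eq, Set.mem_insert_iff, Set.mem_singleton_iff]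
          constructor
          · rintro ⟨k, hkn, hkI, rfl⟩
            by_cases h : (k : ℤ) = i
            · exact Or.inl h
            · exact Or.inr (hA k hkn hkI h)
          · rintro (rfl | rfl)
            · exact ⟨k2, hk2n, hk2I, hk2i⟩
            · exact ⟨k1, hk1n, hk1I, hk1j⟩
        rcases hsplit with hall | hall
        · apply hΦΛ
          have hFφ : φ (A.faceAt Φ i) ∈ φ • Φ := aux_mem_smul.mpr ⟨_, hFi, rfl⟩
          refine sameOrbit_trans ⟨φ, rfl⟩ (aux_connected_orbit A hI hFφ hFΛ ?_)
          intro k hk hkI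
          rw [hrF]
          exact hall k hk hkI
        · apply hΦΛ
          have hGψ : ψ (A.faceAt Φ j) ∈ ψ • Φ := aux_mem_smul.mpr ⟨_, hFj, rfl⟩
          refine sameOrbit_trans ⟨ψ, rfl⟩ (aux_connected_orbit A hI hGψ hGΛ ?_)
          intro k hk hkI
          rw [hrG]
          exact hall k hk hkI
    obtain ⟨Ω, hFΩ, hGΩ, hΦΩ⟩ := hΩ
    obtain ⟨x, hx⟩ := hΦΩ
    have hxF : x (A.faceAt Φ i) = φ (A.faceAt Φ i) := by
      rw [aux_smul_faceAt A x Φ i hi hi', hx]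
      have := A.faceAt_eq Ω _ hFΩ
      rwa [hrF] at this
    have hxG : x (A.faceAt Φ j) = ψ (A.faceAt Φ j) := by
      rw [aux_smul_faceAt A x Φ j hj' hj, hx]
      have := A.faceAt_eq Ω _ hGΩ
      rwa [hrG] at this
    refine ⟨x, ⟨φ⁻¹ * x, ?_, (mul_inv_cancel_left φ x).symm⟩,
      ⟨ψ⁻¹ * x, ?_, (mul_inv_cancel_left ψ x).symm⟩⟩
    · show (φ⁻¹ * x) (A.faceAt Φ i) = A.faceAt Φ i
      apply φ.injective
      rw [← RelIso.mul_apply, mul_inv_cancel_left, hxF]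
    · show (ψ⁻¹ * x) (A.faceAt Φ j) = A.faceAt Φ j
      apply ψ.injective
      rw [← RelIso.mul_apply, mul_inv_cancel_left, hxG]
  · rintro ⟨x, ⟨g, hg, rfl⟩, ⟨h, hh, hxh⟩⟩
    have h1 : φ (A.faceAt Φ i) = (φ * g) (A.faceAt Φ i) := by
      rw [RelIso.mul_apply, mem_faceStab.mp hg]
    have h2 : (φ * g) (A.faceAt Φ j) = ψ (A.faceAt Φ j) := by
      rw [hxh, RelIso.mul_apply, mem_faceStab.mp hh]
    rw [h1, ← h2]
    exact (φ * g).monotone hij_face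
end
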